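/- For n, x ∈ ℤ and t ≥ 0, let F̂_n(x,t) = ((−1)^n/(2πi)) ∮_{|w|=r} dw w^{n−x−1} (1−w)^{−n} e^{t(w−1)}, where the contour is a positively oriented circle of radius r ∈ (0,1) centered at the origin, so that for n ≤ 0 it encloses the only pole of the integrand, at w = 0. Then for every n ≤ −1, x ∈ ℤ and t ≥ 0, the series ∑_{y < x} F̂_n(y,t) converges absolutely and F̂_{n+1}(x,t) = −∑_{y < x} F̂_n(y,t). -/

import Mathlib

/-! On the circle `|w| = r < 1` the integrand of `F̂_n(x - 1 - k, t)` is `w ^ k` times that of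
`F̂_n(x - 1, t)`, so the sum over `y < x` is a geometric series in `w`, dominated by `r ^ k` and
hence integrable term by term. It sums to `(1 - w)⁻¹` times the integrand of `F̂_n(x - 1, t)`,
which is the integrand of `F̂_{n+1}(x, t)`; the prefactors differ by `(-1)^(n+1) = -(-1)^n`. -/

open Complex Metric Set MeasureTheory

/-- `F̂ n x t r = ((-1)^n/(2πi)) ∮_{|w|=r} dw w^(n-x-1) (1-w)^(-n) e^(t(w-1))`,
with the contour a positively oriented circle of radius `r ∈ (0,1)` centered at the
origin, so that for `n ≤ 0` it encloses the only pole of the integrand, at `w = 0`. -/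
noncomputable def Fhat (n x : ℤ) (t : ℝ) (r : ℝ) : ℂ :=
  ((-1 : ℂ) ^ n / (2 * ↑Real.pi * Complex.I)) *
    ∮ w in C(0, r), w ^ (n - x - 1) * (1 - w) ^ (-n) * Complex.exp (↑t * (w - 1))

theorem hasSum_circleIntegral_pow_smul {E : Type*} [NormedAddCommGroup E] [NormedSpace ℂ E]
    {f : ℂ → E} {R : ℝ} (hf : CircleIntegrable f 0 R) (hR : |R| < 1) :
    HasSum (fun k : ℕ => ∮ w in C(0, R), w ^ k • f w) (∮ w in C(0, R), (1 - w)⁻¹ • f w) := by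
  refine intervalIntegral.hasSum_integral_of_dominated_convergence
    (fun k θ => |R| * ‖f (circleMap 0 R θ)‖ * |R| ^ k) (fun k => ?_) (fun k => ?_) ?_ ?_ ?_
  · simp only [deriv_circleMap]
    apply_rules [AEStronglyMeasurable.smul, hf.def'.1] <;>
      apply Measurable.aestronglyMeasurable <;> fun_prop
  · refine .of_forall fun θ _ => le_of_eq ?_
    simp only [deriv_circleMap, norm_smul, norm_mul, norm_pow, norm_circleMap_zero, norm_I]
    ring
  · exact .of_forall fun _ _ =>
      (summable_geometric_of_lt_one (abs_nonneg R) hR).mul_left _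
  · simp only [tsum_mul_left, tsum_geometric_of_lt_one (abs_nonneg R) hR]
    exact (hf.norm.const_mul _).mul_const _
  · refine .of_forall fun θ _ => HasSum.const_smul _ ?_
    have hw : ‖circleMap 0 R θ‖ < 1 := by rwa [norm_circleMap_zero]
    simpa only [smul_smul] using
      (hasSum_geometric_of_norm_lt_one hw).smul_const (f (circleMap 0 R θ))

theorem hasSum_subtype_Iio_iff {α : Type*} [AddCommMonoid α] [TopologicalSpace α]
    {f : ℤ → α} {a : α} (x : ℤ) :
    HasSum (fun y : Iio x => f y) a ↔ HasSum (fun k : ℕ => f (x - 1 - k)) a := by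
  have hrange : range (fun k : ℕ => x - 1 - k) = Iio x := by
    ext y
    simp only [mem_range, mem_Iio]
    exact ⟨fun ⟨k, hk⟩ => by omega, fun hy => ⟨(x - 1 - y).toNat, by omega⟩⟩
  rw [← hrange]
  exact Function.Injective.hasSum_range_iff fun k l h => by simpa using h

noncomputable def fhatIntegrand (n x : ℤ) (t : ℝ) (w : ℂ) : ℂ :=
  w ^ (n - x - 1) * (1 - w) ^ (-n) * exp (t * (w - 1))

theorem fhatIntegrand_sub_natCast (n x : ℤ) (t : ℝ) (k : ℕ) {w : ℂ} (hw : w ≠ 0) :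
    fhatIntegrand n (x - 1 - k) t w = w ^ k * fhatIntegrand n (x - 1) t w := by
  rw [fhatIntegrand, fhatIntegrand, show n - (x - 1 - k) - 1 = k + (n - (x - 1) - 1) by ring,
    zpow_add₀ hw, zpow_natCast]
  ring

theorem inv_one_sub_mul_fhatIntegrand (n x : ℤ) (t : ℝ) {w : ℂ} (hw : w ≠ 1) :
    (1 - w)⁻¹ * fhatIntegrand n (x - 1) t w = fhatIntegrand (n + 1) x t w := by
  rw [fhatIntegrand, fhatIntegrand, show -(n + 1) = -n + (-1) by ring,
    zpow_add₀ (sub_ne_zero.2 hw.symm), zpow_neg_one, show n - (x - 1) - 1 = n + 1 - x - 1 by ring]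
  ring

theorem continuousOn_fhatIntegrand (n x : ℤ) (t : ℝ) {r : ℝ} (hr0 : r ≠ 0) (hr1 : r ≠ 1) :
    ContinuousOn (fhatIntegrand n x t) (sphere 0 r) := by
  have h0 : ∀ w ∈ sphere (0 : ℂ) r, w ≠ 0 := fun w hw h => hr0 (by simp_all)
  have h1 : ∀ w ∈ sphere (0 : ℂ) r, 1 - w ≠ 0 := fun w hw h => hr1 (by
    rw [sub_eq_zero] at h; subst h; simpa using hw.symm)
  unfold fhatIntegrand
  refine ((continuousOn_id.zpow₀ _ fun w hw => .inl (h0 w hw)).mul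
    ((continuousOn_const.sub continuousOn_id).zpow₀ _ fun w hw => .inl (h1 w hw))).mul ?_
  fun_prop

theorem hasSum_circleIntegral_fhatIntegrand (n x : ℤ) (t : ℝ) {r : ℝ} (hr : r ∈ Ioo (0 : ℝ) 1) :
    HasSum (fun k : ℕ => ∮ w in C(0, r), fhatIntegrand n (x - 1 - k) t w)
      (∮ w in C(0, r), fhatIntegrand (n + 1) x t w) := by
  obtain ⟨hr0, hr1⟩ := hr
  have hint := (continuousOn_fhatIntegrand n (x - 1) t hr0.ne' hr1.ne).circleIntegrable hr0.le
  have hterm : (fun k : ℕ => ∮ w in C(0, r), fhatIntegrand n (x - 1 - k) t w) =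
      fun k : ℕ => ∮ w in C(0, r), w ^ k • fhatIntegrand n (x - 1) t w :=
    funext fun k => circleIntegral.integral_congr hr0.le fun w hw =>
      fhatIntegrand_sub_natCast n x t k (ne_of_mem_sphere hw hr0.ne')
  have hlim : ∮ w in C(0, r), fhatIntegrand (n + 1) x t w =
      ∮ w in C(0, r), (1 - w)⁻¹ • fhatIntegrand n (x - 1) t w := by
    refine circleIntegral.integral_congr hr0.le fun w hw => ?_
    refine (inv_one_sub_mul_fhatIntegrand n x t fun h => hr1.ne ?_).symm
    simpa [h] using hw.symm
  rw [hterm, hlim]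
  exact hasSum_circleIntegral_pow_smul hint (by rwa [abs_of_pos hr0])

theorem statement9_general (n x : ℤ) (t : ℝ) (r : ℝ)
    (hr : r ∈ Set.Ioo (0 : ℝ) 1) :
    Summable (fun y : ↥(Set.Iio x) => Fhat n (↑y) t r) ∧
      Fhat (n + 1) x t r = -∑' y : ↥(Set.Iio x), Fhat n (↑y) t r := by
  have hsum : HasSum (fun y : Iio x => Fhat n y t r)
      ((-1 : ℂ) ^ n / (2 * Real.pi * I) * ∮ w in C(0, r), fhatIntegrand (n + 1) x t w) :=
    (hasSum_subtype_Iio_iff (f := fun y => Fhat n y t r) x).2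
      ((hasSum_circleIntegral_fhatIntegrand n x t hr).mul_left _)
  refine ⟨hsum.summable, ?_⟩
  have hsign : (-1 : ℂ) ^ (n + 1) = -(-1) ^ n := by
    rw [zpow_add_one₀ (neg_ne_zero.2 one_ne_zero), mul_neg_one]
  rw [hsum.tsum_eq, Fhat, hsign]
  simp only [fhatIntegrand]
  ring

/-- For every `n ≤ -1`, `x ∈ ℤ`, `t ≥ 0` and radius `r ∈ (0,1)`, the series
`∑_{y < x} F̂_n(y,t)` converges absolutely and `F̂_{n+1}(x,t) = -∑_{y < x} F̂_n(y,t)`. -/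
theorem statement9 (n x : ℤ) (hn : n ≤ -1) (t : ℝ) (ht : 0 ≤ t) (r : ℝ)
    (hr : r ∈ Set.Ioo (0 : ℝ) 1) :
    Summable (fun y : ↥(Set.Iio x) => Fhat n (↑y) t r) ∧
      Fhat (n + 1) x t r = -∑' y : ↥(Set.Iio x), Fhat n (↑y) t r :=
  statement9_general n x t r hr
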